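/- Let T be a string of length n whose n rotations are pairwise lexicographically distinct. Define LCP_T[1] = 0 and, for 2 ≤ i ≤ n, LCP_T[i] = the length of the longest common prefix of the rotations of T of lexicographic ranks i−1 and i; define the permuted LCP array by PLCP_T[SA_T[i]] = LCP_T[i] for all i ∈ [1..n]. Then for every position 1 ≤ p ≤ n−1, PLCP_T[p+1] ≥ PLCP_T[p] − 1. -/

import Mathlib

/-!
Let rotation `p` have rank `i ≥ 2` and share `m + 1 ≥ 1` characters with the rotation `q` of
rank `i - 1`. Both start with the same character, so deleting it shows that rotation `q + 1`
precedes rotation `p + 1` and shares `m` characters with it. The rotation of rank just below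
that of `p + 1` lies between these two, and truncation to length `m` is monotone for the
lexicographic order, so it also shares `m` characters with rotation `p + 1`.
-/

namespace List

variable {α : Type*}

theorem Lex.append_of_length_eq {r : α → α → Prop} {l₁ l₂ : List α} (h : Lex r l₁ l₂)
    (hlen : l₁.length = l₂.length) (t₁ t₂ : List α) : Lex r (l₁ ++ t₁) (l₂ ++ t₂) := by
  induction h with
  | nil => simp at hlen
  | cons _ ih => exact .cons (ih (by simpa using hlen))
  | rel h => exact .rel h

theorem rotate_succ_of_rotate_eq_cons {l u : List α} {k : ℕ} {c : α}
    (h : l.rotate k = c :: u) : l.rotate (k + 1) = u ++ [c] := by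
  rw [← rotate_rotate, h, rotate_cons_succ, rotate_zero]

theorem exists_mem_Icc_rotate_sub_one_eq {l : List α} {n : ℕ} (hn : l.length = n) (hpos : 0 < n)
    (k : ℕ) : ∃ v ∈ Set.Icc 1 n, l.rotate (v - 1) = l.rotate k :=
  ⟨k % n + 1, ⟨by omega, Nat.mod_lt _ hpos⟩, by rw [Nat.add_sub_cancel, ← hn, rotate_mod]⟩

variable [LinearOrder α]

theorem take_le_take_of_lt {l₁ l₂ : List α} (h : l₁ < l₂) (m : ℕ) :
    l₁.take m ≤ l₂.take m := by
  induction h generalizing m with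
  | nil => exact not_lt.1 (by simp)
  | cons _ ih =>
    cases m with
    | zero => simp
    | succ m => exact cons_le_cons _ (ih m)
  | rel h =>
    cases m with
    | zero => simp
    | succ m => exact (cons_lt_cons_iff.2 (Or.inl h)).le

theorem monotone_take (m : ℕ) : Monotone (take m : List α → List α) := by
  intro l₁ l₂ h
  rcases h.lt_or_eq with h | rfl
  · exact take_le_take_of_lt h m
  · rfl

theorem take_eq_take_of_le_of_le {a b c : List α} {m : ℕ} (hab : a ≤ b) (hbc : b ≤ c)
    (hac : a.take m = c.take m) : b.take m = c.take m :=
  le_antisymm (monotone_take m hbc) (hac ▸ monotone_take m hab)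

theorem rotate_succ_lt_and_take_eq {l : List α} {x y m : ℕ} (hlt : l.rotate x < l.rotate y)
    (htake : (l.rotate x).take (m + 1) = (l.rotate y).take (m + 1)) :
    l.rotate (x + 1) < l.rotate (y + 1) ∧
      (l.rotate (x + 1)).take m = (l.rotate (y + 1)).take m := by
  have hlen : (l.rotate x).length = (l.rotate y).length := by simp
  have hl : l ≠ [] := by rintro rfl; simp at hlt
  obtain ⟨c, u, hx⟩ := exists_cons_of_ne_nil (rotate_eq_nil_iff.not.2 hl : l.rotate x ≠ [])
  obtain ⟨d, v, hy⟩ := exists_cons_of_ne_nil (rotate_eq_nil_iff.not.2 hl : l.rotate y ≠ [])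
  rw [hx, hy, take_succ_cons, take_succ_cons, cons.injEq] at htake
  obtain ⟨rfl, htake⟩ := htake
  rw [hx, hy] at hlt hlen
  simp only [length_cons, Nat.add_right_cancel_iff] at hlen
  rw [rotate_succ_of_rotate_eq_cons hx, rotate_succ_of_rotate_eq_cons hy]
  refine ⟨Lex.append_of_length_eq ((cons_lt_cons_iff.1 hlt).resolve_left (lt_irrefl c)).2
    hlen _ _, ?_⟩
  rw [take_append, take_append, htake, hlen]

end List

theorem StrictMonoOn.le_apply_sub_one_of_apply_lt {β : Type*} [LinearOrder β] {g : ℕ → β}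
    {n r j : ℕ} (hg : StrictMonoOn g (Set.Icc 1 n)) (hr : r ∈ Set.Icc 1 n)
    (hj : j ∈ Set.Icc 1 n) (h : g r < g j) : 2 ≤ j ∧ g r ≤ g (j - 1) := by
  have hrj : r < j := (hg.lt_iff_lt hr hj).1 h
  obtain ⟨hr1, -⟩ := hr
  obtain ⟨-, hjn⟩ := hj
  exact ⟨by omega, hg.monotoneOn ⟨hr1, by omega⟩ ⟨by omega, by omega⟩ (by omega)⟩

theorem plcp_delta_monotone_general {α : Type*} [LinearOrder α]
    (T : List α) (n : ℕ) (hn : T.length = n)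
    (sa : ℕ → ℕ)
    (hsa_mono : ∀ i j, 1 ≤ i → i < j → j ≤ n →
      List.Lex (· < ·) (T.rotate (sa i - 1)) (T.rotate (sa j - 1)))
    (hsa_surj : ∀ v, 1 ≤ v → v ≤ n → ∃ i, 1 ≤ i ∧ i ≤ n ∧ sa i = v)
    (LCP : ℕ → ℕ) (hLCP1 : LCP 1 = 0)
    (hLCP : ∀ i, 2 ≤ i → i ≤ n →
      IsGreatest {l | (T.rotate (sa (i - 1) - 1)).take l
        = (T.rotate (sa i - 1)).take l} (LCP i))
    (PLCP : ℕ → ℕ) (hPLCP : ∀ i, 1 ≤ i → i ≤ n → PLCP (sa i) = LCP i) :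
    ∀ p, 1 ≤ p → p ≤ n - 1 → PLCP p - 1 ≤ PLCP (p + 1) := by
  have hsorted : StrictMonoOn (fun i => T.rotate (sa i - 1)) (Set.Icc 1 n) :=
    fun i hi j hj hij => hsa_mono i j hi.1 hij hj.2
  intro p hp hpn
  obtain ⟨i, hi1, hin, rfl⟩ := hsa_surj p hp (by omega)
  obtain ⟨j, hj1, hjn, hj⟩ := hsa_surj (sa i + 1) (by omega) (by omega)
  rw [hPLCP i hi1 hin, ← hj, hPLCP j hj1 hjn]
  obtain rfl | hi2 := hi1.eq_or_lt
  · simp [hLCP1]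
  by_cases h0 : LCP i = 0
  · simp [h0]
  obtain ⟨m, hm⟩ := Nat.exists_eq_add_one_of_ne_zero h0
  have hprefix := (hLCP i hi2 hin).1
  rw [hm] at hprefix
  obtain ⟨hlt, htake⟩ := List.rotate_succ_lt_and_take_eq
    (hsorted ⟨by omega, by omega⟩ ⟨hi1, hin⟩ (by omega)) hprefix
  rw [Nat.sub_add_cancel hp, ← Nat.add_sub_cancel (sa i) 1, ← hj] at hlt htake
  obtain ⟨v, ⟨hv1, hvn⟩, hrot⟩ :=
    List.exists_mem_Icc_rotate_sub_one_eq hn (by omega) (sa (i - 1) - 1 + 1)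
  obtain ⟨r, hr1, hrn, rfl⟩ := hsa_surj v hv1 hvn
  obtain ⟨hj2, hle⟩ := hsorted.le_apply_sub_one_of_apply_lt ⟨hr1, hrn⟩ ⟨hj1, hjn⟩
    (by simpa only [hrot] using hlt)
  have hpred : m ∈ {l | (T.rotate (sa (j - 1) - 1)).take l = (T.rotate (sa j - 1)).take l} :=
    List.take_eq_take_of_le_of_le (hrot ▸ hle)
      (hsorted ⟨by omega, by omega⟩ ⟨hj1, hjn⟩ (by omega)).le htake
  simpa [hm] using (hLCP j hj2 hjn).2 hpred

/-- the permuted LCP array satisfies `PLCP[p+1] ≥ PLCP[p] − 1`.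
Here `sa` is the (1-based) suffix array of `T`, `LCP i` is the length of the longest
common prefix of the rotations of lexicographic ranks `i−1` and `i` (with
`LCP 1 = 0`), and `PLCP` is the permutation of `LCP` in string order, i.e.
`PLCP (sa i) = LCP i`. -/
theorem plcp_delta_monotone {α : Type*} [LinearOrder α]
    (T : List α) (n : ℕ) (hn : T.length = n) (hpos : 1 ≤ n)
    (hdistinct : ∀ i j, i < n → j < n → T.rotate i = T.rotate j → i = j)
    (sa : ℕ → ℕ)
    (hsa_range : ∀ i, 1 ≤ i → i ≤ n → 1 ≤ sa i ∧ sa i ≤ n)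
    (hsa_mono : ∀ i j, 1 ≤ i → i < j → j ≤ n →
      List.Lex (· < ·) (T.rotate (sa i - 1)) (T.rotate (sa j - 1)))
    (hsa_surj : ∀ v, 1 ≤ v → v ≤ n → ∃ i, 1 ≤ i ∧ i ≤ n ∧ sa i = v)
    (LCP : ℕ → ℕ) (hLCP1 : LCP 1 = 0)
    (hLCP : ∀ i, 2 ≤ i → i ≤ n →
      IsGreatest {l | (T.rotate (sa (i - 1) - 1)).take l
        = (T.rotate (sa i - 1)).take l} (LCP i))
    (PLCP : ℕ → ℕ) (hPLCP : ∀ i, 1 ≤ i → i ≤ n → PLCP (sa i) = LCP i) :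
    ∀ p, 1 ≤ p → p ≤ n - 1 → PLCP p - 1 ≤ PLCP (p + 1) :=
  plcp_delta_monotone_general T n hn sa hsa_mono hsa_surj LCP hLCP1 hLCP PLCP hPLCP
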